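/- Let D be a directed graph (of arbitrary cardinality) whose longest directed path has length k, where 0 ≤ k < ∞ (length counts edges). Then the underlying undirected graph of D has chromatic number at most k+1. -/

import Mathlib

/-!
By Zorn's lemma `E` contains a maximal acyclic subrelation `r`; by maximality, every edge
`u → v` of `E` outside `r` is reversed by an `r`-path from `v` to `u`. As `r` is acyclic, its
walks are paths of `E` and so have length at most `k`. Colouring `v` by the length of a longest
`r`-walk from `v` is then a proper `(k + 1)`-colouring, since this height strictly decreases
along `r`, hence along every `r`-path.
-/

open Relation Function

namespace Relation

variable {V : Type*} {r : V → V → Prop}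

def Acyclic (r : V → V → Prop) : Prop := ∀ v, ¬ TransGen r v v

theorem Acyclic.injective_of_chain (hr : Acyclic r) {n : ℕ} {p : Fin (n + 1) → V}
    (hp : ∀ i : Fin n, r (p i.castSucc) (p i.succ)) : Injective p := by
  have hchain : (List.ofFn p).IsChain (TransGen r) :=
    List.isChain_ofFn.mpr fun i hi => .single (hp ⟨i, by omega⟩)
  exact List.nodup_ofFn.mp <| hchain.pairwise.imp (S := (· ≠ ·)) fun hab heq => hr _ (heq ▸ hab)

theorem transGen_sup_edge {u v a b : V}
    (h : TransGen (fun x y => r x y ∨ x = u ∧ y = v) a b) :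
    TransGen r a b ∨ ReflTransGen r a u ∧ ReflTransGen r v b := by
  induction h with
  | single hab =>
    rcases hab with hab | ⟨rfl, rfl⟩
    · exact .inl (.single hab)
    · exact .inr ⟨.refl, .refl⟩
  | tail _ hbc ih =>
    rcases hbc with hbc | ⟨rfl, rfl⟩
    · exact ih.imp (·.tail hbc) fun ⟨hau, hvb⟩ => ⟨hau, hvb.tail hbc⟩
    · exact .inr ⟨ih.elim (·.to_reflTransGen) (·.1), .refl⟩

theorem Acyclic.sup_edge (hr : Acyclic r) {u v : V} (hvu : ¬ ReflTransGen r v u) :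
    Acyclic fun x y => r x y ∨ x = u ∧ y = v := fun w hw =>
  (transGen_sup_edge hw).elim (hr w) fun ⟨hwu, hvw⟩ => hvu (hvw.trans hwu)

theorem exists_transGen_of_isChain {c : Set (V → V → Prop)} (hc : IsChain (· ≤ ·) c) {a b : V}
    (h : TransGen (fun x y => ∃ s ∈ c, s x y) a b) : ∃ s ∈ c, TransGen s a b := by
  induction h with
  | single hab =>
    obtain ⟨s, hs, hab⟩ := hab
    exact ⟨s, hs, .single hab⟩
  | tail _ hbc ih =>
    obtain ⟨s, hs, hab⟩ := ih
    obtain ⟨t, ht, hbc⟩ := hbc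
    rcases hc.total hs ht with hst | hts
    · exact ⟨t, ht, (TransGen.mono hst _ _ hab).tail hbc⟩
    · exact ⟨s, hs, hab.tail (hts _ _ hbc)⟩

theorem exists_maximal_acyclic_le (E : V → V → Prop) :
    ∃ r ≤ E, Acyclic r ∧ ∀ u v, E u v → r u v ∨ ReflTransGen r v u := by
  obtain ⟨r, ⟨hrE, hr⟩, hmax⟩ := zorn_le₀ {r | r ≤ E ∧ Acyclic r} fun c hcS hc =>
    ⟨fun x y => ∃ s ∈ c, s x y,
      ⟨fun x y ⟨s, hs, hxy⟩ => (hcS hs).1 x y hxy,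
        fun v hv => let ⟨s, hs, hvv⟩ := exists_transGen_of_isChain hc hv; (hcS hs).2 v hvv⟩,
      fun s hs x y hxy => ⟨s, hs, hxy⟩⟩
  refine ⟨r, hrE, hr, fun u v huv => or_iff_not_imp_right.mpr fun hvu => ?_⟩
  have hle := hmax ⟨fun x y hxy => hxy.elim (hrE x y) fun ⟨hx, hy⟩ => hx ▸ hy ▸ huv,
    hr.sup_edge hvu⟩ fun x y => Or.inl
  exact hle u v (.inr ⟨rfl, rfl⟩)

end Relation

section Height

variable {V : Type*} {r : V → V → Prop}

def HasWalkOfLength (r : V → V → Prop) (v : V) (n : ℕ) : Prop :=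
  ∃ p : Fin (n + 1) → V, p 0 = v ∧ ∀ i : Fin n, r (p i.castSucc) (p i.succ)

theorem HasWalkOfLength.cons {u v : V} {n : ℕ} (huv : r u v) (h : HasWalkOfLength r v n) :
    HasWalkOfLength r u (n + 1) := by
  obtain ⟨p, rfl, hp⟩ := h
  exact ⟨Fin.cons u p, rfl, Fin.cases huv fun i => by simpa using hp i⟩

/-- The length of a longest `r`-walk from `v`; it is `0` when such lengths are unbounded. -/
noncomputable def height (r : V → V → Prop) (v : V) : ℕ := sSup {n | HasWalkOfLength r v n}

variable {k : ℕ} (hk : ∀ v n, HasWalkOfLength r v n → n ≤ k)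
include hk

theorem hasWalkOfLength_height (v : V) : HasWalkOfLength r v (height r v) :=
  Nat.sSup_mem ⟨0, show HasWalkOfLength r v 0 from ⟨fun _ => v, rfl, Fin.elim0⟩⟩ ⟨k, hk v⟩

theorem height_le (v : V) : height r v ≤ k := hk v _ (hasWalkOfLength_height hk v)

theorem height_lt_of_rel {u v : V} (huv : r u v) : height r v < height r u :=
  le_csSup ⟨k, hk u⟩ ((hasWalkOfLength_height hk v).cons huv)

theorem height_lt_of_transGen {u v : V} (huv : TransGen r u v) : height r v < height r u := by
  simpa [transGen_eq_self] using TransGen.lift (p := (· > ·)) (height r)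
    (fun _ _ => height_lt_of_rel hk) _ _ huv

end Height

theorem stmt2 {V : Type*} (E : V → V → Prop) (k : ℕ)
    (hbdd : ∀ (m : ℕ) (v : Fin (m + 1) → V), Function.Injective v →
      (∀ i : Fin m, E (v i.castSucc) (v i.succ)) → m ≤ k) :
    (SimpleGraph.fromRel E).Colorable (k + 1) := by
  obtain ⟨r, hrE, hr, hE⟩ := exists_maximal_acyclic_le E
  have hk : ∀ v n, HasWalkOfLength r v n → n ≤ k := fun _ n ⟨p, _, hp⟩ =>
    hbdd n p (hr.injective_of_chain hp) fun i => hrE _ _ (hp i)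
  have hne : ∀ u v, E u v → u ≠ v → height r u ≠ height r v := fun u v he huv =>
    (hE u v he).elim (fun h => (height_lt_of_rel hk h).ne') fun h =>
      (height_lt_of_transGen hk ((reflTransGen_iff_eq_or_transGen.mp h).resolve_left huv)).ne
  refine ⟨.mk (fun v => ⟨height r v, Nat.lt_succ_of_le (height_le hk v)⟩) ?_⟩
  rintro u v ⟨huv, he | he⟩ heq
  · exact hne u v he huv (Fin.val_eq_of_eq heq)
  · exact hne v u he huv.symm (Fin.val_eq_of_eq heq).symm
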